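/- arXiv:2408.04607 — 6 statements merged into one kernel-verified Lean document; each statement's English description precedes it below -/
import Mathlib

section
/- Let Σ be a real symmetric positive-semidefinite N×N matrix and let q > 0. For every λ > 0 there exists a unique κ > 0 satisfying κ·(1 − q·df¹_Σ(κ)) = λ, and this solution κ is a strictly increasing function of λ. -/
open Matrix

/-- First degrees of freedom: `df¹_A(κ) = (1/n)·Tr(A(A + κI)⁻¹)`. -/
noncomputable def df1 {n : ℕ} (A : Matrix (Fin n) (Fin n) ℝ) (κ : ℝ) : ℝ :=
  (1 / (n : ℝ)) * (A * (A + κ • (1 : Matrix (Fin n) (Fin n) ℝ))⁻¹).trace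

/-- Second degrees of freedom: `df²_A(κ) = (1/n)·Tr(A²(A + κI)⁻²)`. -/
noncomputable def df2 {n : ℕ} (A : Matrix (Fin n) (Fin n) ℝ) (κ : ℝ) : ℝ :=
  (1 / (n : ℝ)) * (A ^ 2 * ((A + κ • (1 : Matrix (Fin n) (Fin n) ℝ))⁻¹) ^ 2).trace

lemma df1_eq_sum {N : ℕ} (Sg : Matrix (Fin N) (Fin N) ℝ) (hSg : Sg.PosSemidef)
    {κ : ℝ} (hκ : 0 < κ) :
    df1 Sg κ = (1 / (N : ℝ)) *
      ∑ i, hSg.1.eigenvalues i / (hSg.1.eigenvalues i + κ) := by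
  set μ := hSg.1.eigenvalues with hμdef
  set U : Matrix (Fin N) (Fin N) ℝ := (hSg.1.eigenvectorUnitary : Matrix (Fin N) (Fin N) ℝ)
    with hUdef
  have hUU : U * star U = 1 := (Matrix.mem_unitaryGroup_iff).mp hSg.1.eigenvectorUnitary.2
  have hUU' : star U * U = 1 := (Matrix.mem_unitaryGroup_iff').mp hSg.1.eigenvectorUnitary.2
  have hspec : Sg = U * Matrix.diagonal μ * star U := by
    have := hSg.1.spectral_theorem
    simpa [RCLike.ofReal_real_eq_id] using this
  have hden : ∀ i, μ i + κ ≠ 0 := fun i =>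
    ne_of_gt (add_pos_of_nonneg_of_pos (hSg.eigenvalues_nonneg i) hκ)
  have hsum : Sg + κ • (1 : Matrix (Fin N) (Fin N) ℝ)
      = U * Matrix.diagonal (fun i => μ i + κ) * star U := by
    have h1 : κ • (1 : Matrix (Fin N) (Fin N) ℝ) = U * (κ • 1) * star U := by
      rw [Matrix.mul_smul, Matrix.smul_mul, mul_one, hUU]
    rw [← Matrix.diagonal_add]
    calc Sg + κ • (1 : Matrix (Fin N) (Fin N) ℝ)
        = U * Matrix.diagonal μ * star U + U * (κ • 1) * star U := by rw [← hspec, ← h1]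
      _ = U * (Matrix.diagonal μ + κ • 1) * star U := by
          rw [Matrix.mul_add, Matrix.add_mul]
      _ = U * (Matrix.diagonal μ + Matrix.diagonal (fun _ => κ)) * star U := by
          rw [Matrix.smul_one_eq_diagonal]
  have hinv : (Sg + κ • (1 : Matrix (Fin N) (Fin N) ℝ))⁻¹
      = U * Matrix.diagonal (fun i => (μ i + κ)⁻¹) * star U := by
    apply Matrix.inv_eq_right_inv
    rw [hsum]
    calc U * Matrix.diagonal (fun i => μ i + κ) * star U *
          (U * Matrix.diagonal (fun i => (μ i + κ)⁻¹) * star U)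
        = U * Matrix.diagonal (fun i => μ i + κ) * (star U * U) *
            Matrix.diagonal (fun i => (μ i + κ)⁻¹) * star U := by
          simp only [Matrix.mul_assoc]
      _ = U * (Matrix.diagonal (fun i => μ i + κ) *
            Matrix.diagonal (fun i => (μ i + κ)⁻¹)) * star U := by
          rw [hUU', mul_one]; simp only [Matrix.mul_assoc]
      _ = 1 := by
          rw [Matrix.diagonal_mul_diagonal]
          have : (fun i => (μ i + κ) * (μ i + κ)⁻¹) = fun _ => (1 : ℝ) := by
            funext i; exact mul_inv_cancel₀ (hden i)
          rw [this, Matrix.diagonal_one, mul_one, hUU]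
  have hprod : Sg * (Sg + κ • (1 : Matrix (Fin N) (Fin N) ℝ))⁻¹
      = U * Matrix.diagonal (fun i => μ i * (μ i + κ)⁻¹) * star U := by
    rw [hinv]
    conv_lhs => rw [hspec]
    calc U * Matrix.diagonal μ * star U * (U * Matrix.diagonal (fun i => (μ i + κ)⁻¹) * star U)
        = U * Matrix.diagonal μ * (star U * U) * Matrix.diagonal (fun i => (μ i + κ)⁻¹)
            * star U := by simp only [Matrix.mul_assoc]
      _ = U * (Matrix.diagonal μ * Matrix.diagonal (fun i => (μ i + κ)⁻¹)) * star U := by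
          rw [hUU', mul_one]; simp only [Matrix.mul_assoc]
      _ = U * Matrix.diagonal (fun i => μ i * (μ i + κ)⁻¹) * star U := by
          rw [Matrix.diagonal_mul_diagonal]
  have htr : (Sg * (Sg + κ • (1 : Matrix (Fin N) (Fin N) ℝ))⁻¹).trace
      = ∑ i, μ i / (μ i + κ) := by
    rw [hprod, Matrix.trace_mul_cycle, hUU', one_mul, Matrix.trace_diagonal]
    simp [div_eq_mul_inv]
  rw [df1, htr]

/-- For a symmetric positive-semidefinite `Σ` and `q > 0`, for every `λ > 0`
there exists a unique `κ > 0` with `κ·(1 − q·df¹_Σ(κ)) = λ`, and the solution is a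
strictly increasing function of `λ`. -/
theorem stmt2 {N : ℕ} (Sg : Matrix (Fin N) (Fin N) ℝ) (hSg : Sg.PosSemidef)
    (q : ℝ) (hq : 0 < q) :
    (∀ lam : ℝ, 0 < lam → ∃! κ : ℝ, 0 < κ ∧ κ * (1 - q * df1 Sg κ) = lam) ∧
    (∀ lam₁ lam₂ κ₁ κ₂ : ℝ, 0 < lam₁ → 0 < lam₂ → lam₁ < lam₂ →
      0 < κ₁ → κ₁ * (1 - q * df1 Sg κ₁) = lam₁ →
      0 < κ₂ → κ₂ * (1 - q * df1 Sg κ₂) = lam₂ → κ₁ < κ₂) := by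
  set μ := hSg.1.eigenvalues with hμdef
  have hμ : ∀ i, 0 ≤ μ i := fun i => hSg.eigenvalues_nonneg i
  set d1 : ℝ → ℝ := fun κ => (1 / (N : ℝ)) * ∑ i, μ i / (μ i + κ) with hd1def
  have hdf1 : ∀ κ : ℝ, 0 < κ → df1 Sg κ = d1 κ := fun κ hκ => df1_eq_sum Sg hSg hκ
  set f : ℝ → ℝ := fun κ => κ * (1 - q * d1 κ) with hfdef
  have hNnn : (0:ℝ) ≤ 1 / (N : ℝ) := by positivity
  -- d1 is nonneg on positives
  have hd1nn : ∀ κ : ℝ, 0 < κ → 0 ≤ d1 κ := by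
    intro κ hκ
    apply mul_nonneg hNnn
    apply Finset.sum_nonneg
    intro i _
    exact div_nonneg (hμ i) (le_of_lt (add_pos_of_nonneg_of_pos (hμ i) hκ))
  -- d1 is antitone on positives
  have hanti : ∀ κ κ' : ℝ, 0 < κ → κ ≤ κ' → d1 κ' ≤ d1 κ := by
    intro κ κ' hκ hle
    apply mul_le_mul_of_nonneg_left _ hNnn
    apply Finset.sum_le_sum
    intro i _
    exact div_le_div_of_nonneg_left (hμ i) (add_pos_of_nonneg_of_pos (hμ i) hκ)
      (by linarith)
  -- strict monotonicity of f where q * d1 κ < 1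
  have hmono : ∀ κ κ' : ℝ, 0 < κ → κ < κ' → q * d1 κ < 1 → f κ < f κ' := by
    intro κ κ' hκ hlt hS
    have h1 : f κ' = κ' * (1 - q * d1 κ') := rfl
    have h2 : κ' * (1 - q * d1 κ) ≤ κ' * (1 - q * d1 κ') := by
      apply mul_le_mul_of_nonneg_left _ (by linarith)
      have := hanti κ κ' hκ (le_of_lt hlt)
      nlinarith
    have h3 : κ * (1 - q * d1 κ) < κ' * (1 - q * d1 κ) :=
      mul_lt_mul_of_pos_right hlt (by linarith)
    calc f κ = κ * (1 - q * d1 κ) := rfl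
      _ < κ' * (1 - q * d1 κ) := h3
      _ ≤ κ' * (1 - q * d1 κ') := h2
      _ = f κ' := rfl
  -- any positive solution lies in the region q * d1 κ < 1
  have hreg : ∀ κ lam : ℝ, 0 < κ → 0 < lam → f κ = lam → q * d1 κ < 1 := by
    intro κ lam hκ hlam hfk
    by_contra h
    push_neg at h
    have : f κ ≤ 0 := mul_nonpos_of_nonneg_of_nonpos (le_of_lt hκ) (by linarith)
    linarith [hfk ▸ this]
  -- existence
  have hexists : ∀ lam : ℝ, 0 < lam → ∃ κ : ℝ, 0 < κ ∧ f κ = lam := by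
    intro lam hlam
    set C : ℝ := (1 / (N : ℝ)) * ∑ i, μ i with hCdef
    have hCnn : 0 ≤ C := mul_nonneg hNnn (Finset.sum_nonneg fun i _ => hμ i)
    set a : ℝ := lam / 2 with hadef
    set b : ℝ := lam + q * C with hbdef
    have ha : 0 < a := by positivity
    have hab : a ≤ b := by nlinarith
    have hb : 0 < b := lt_of_lt_of_le ha hab
    -- continuity on [a, b]
    have hcont : ContinuousOn f (Set.Icc a b) := by
      apply ContinuousOn.mul continuousOn_id
      apply ContinuousOn.sub continuousOn_const
      apply ContinuousOn.mul continuousOn_const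
      apply ContinuousOn.mul continuousOn_const
      apply continuousOn_finset_sum
      intro i _
      apply ContinuousOn.div continuousOn_const
      · exact (continuous_const.add continuous_id).continuousOn
      · intro x hx
        exact ne_of_gt (add_pos_of_nonneg_of_pos (hμ i) (lt_of_lt_of_le ha hx.1))
    have hfa : f a ≤ lam := by
      have : f a ≤ a := by
        have h1 : 0 ≤ q * d1 a := mul_nonneg hq.le (hd1nn a ha)
        have h2 : f a = a * (1 - q * d1 a) := rfl
        nlinarith
      linarith
    have hfb : lam ≤ f b := by
      have hbd1 : b * d1 b ≤ C := by
        rw [hd1def, hCdef]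
        rw [mul_comm b, mul_assoc, Finset.sum_mul]
        apply mul_le_mul_of_nonneg_left _ hNnn
        apply Finset.sum_le_sum
        intro i _
        have hpos : 0 < μ i + b := add_pos_of_nonneg_of_pos (hμ i) hb
        rw [div_mul_eq_mul_div, div_le_iff₀ hpos]
        nlinarith [hμ i]
      have : f b = b - q * (b * d1 b) := by ring
      rw [this]
      nlinarith
    have := intermediate_value_Icc hab hcont
    have hmem : lam ∈ Set.Icc (f a) (f b) := ⟨hfa, hfb⟩
    obtain ⟨κ, hκmem, hκeq⟩ := this hmem
    exact ⟨κ, lt_of_lt_of_le ha hκmem.1, hκeq⟩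
  constructor
  · intro lam hlam
    obtain ⟨κ, hκ, hκeq⟩ := hexists lam hlam
    refine ⟨κ, ⟨hκ, by rw [hdf1 κ hκ]; exact hκeq⟩, ?_⟩
    rintro κ' ⟨hκ', hκ'eq⟩
    rw [hdf1 κ' hκ'] at hκ'eq
    have hκ'f : f κ' = lam := hκ'eq
    rcases lt_trichotomy κ' κ with h | h | h
    · exfalso
      have := hmono κ' κ hκ' h (hreg κ' lam hκ' hlam hκ'f)
      rw [hκeq, hκ'f] at this; exact lt_irrefl _ this
    · exact h
    · exfalso
      have := hmono κ κ' hκ h (hreg κ lam hκ hlam hκeq)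
      rw [hκeq, hκ'f] at this; exact lt_irrefl _ this
  · intro lam₁ lam₂ κ₁ κ₂ hl₁ hl₂ hll hκ₁ heq₁ hκ₂ heq₂
    rw [hdf1 κ₁ hκ₁] at heq₁
    rw [hdf1 κ₂ hκ₂] at heq₂
    have hf₁ : f κ₁ = lam₁ := heq₁
    have hf₂ : f κ₂ = lam₂ := heq₂
    by_contra h
    push_neg at h
    rcases eq_or_lt_of_le h with h' | h'
    · rw [h'] at hf₂; rw [hf₁] at hf₂; linarith
    · have := hmono κ₂ κ₁ hκ₂ h' (hreg κ₂ lam₂ hκ₂ hl₂ hf₂)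
      rw [hf₁, hf₂] at this; linarith
end

section
/- Let Σ be a nonzero real symmetric positive-semidefinite N×N matrix, let K be a real symmetric positive-definite T×T matrix with (1/T)·Tr(K) = 1, and let q > 0 and λ > 0. Suppose κ_c > 0 and κ̃_c > 0 satisfy the coupled equations df¹_K(κ̃_c) = q·df¹_Σ(κ_c) and κ_c·κ̃_c·q·df¹_Σ(κ_c) = λ, and suppose κ_u > 0 satisfies κ_u·(1 − q·df¹_Σ(κ_u)) = λ. Then κ_c ≥ κ_u, i.e., the renormalized ridge for correlated samples is at least the renormalized ridge for uncorrelated samples. -/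
open Matrix

section helpers


variable {n : ℕ}

lemma df1_eq_sum_s3 (A : Matrix (Fin n) (Fin n) ℝ) (hA : A.PosSemidef) {κ : ℝ} (hκ : 0 < κ) :
    (1 / (n : ℝ)) * (A * (A + κ • (1 : Matrix (Fin n) (Fin n) ℝ))⁻¹).trace
      = (1 / (n : ℝ)) * ∑ i, hA.1.eigenvalues i / (hA.1.eigenvalues i + κ) := by
  classical
  set U : Matrix (Fin n) (Fin n) ℝ := (hA.1.eigenvectorUnitary : Matrix (Fin n) (Fin n) ℝ)
  set μ : Fin n → ℝ := hA.1.eigenvalues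
  have hUU : U * star U = 1 := (Matrix.mem_unitaryGroup_iff).mp hA.1.eigenvectorUnitary.2
  have hUU' : star U * U = 1 := (Matrix.mem_unitaryGroup_iff').mp hA.1.eigenvectorUnitary.2
  have hspec : A = U * diagonal μ * star U := by
    have := hA.1.spectral_theorem
    simpa using this
  have hpos : ∀ i, 0 < μ i + κ := fun i =>
    add_pos_of_nonneg_of_pos (hA.eigenvalues_nonneg i) hκ
  have hAκ : A + κ • (1 : Matrix (Fin n) (Fin n) ℝ)
      = U * diagonal (fun i => μ i + κ) * star U := by
    have h1 : (κ • (1 : Matrix (Fin n) (Fin n) ℝ)) = U * (κ • 1) * star U := by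
      rw [mul_smul_comm, mul_one, smul_mul_assoc, hUU]
    rw [h1, hspec]
    rw [← Matrix.add_mul, ← Matrix.mul_add]
    congr 2
    ext i j
    by_cases h : i = j <;> simp [h, Matrix.diagonal_apply, Matrix.one_apply]
  have hinv : (A + κ • (1 : Matrix (Fin n) (Fin n) ℝ))⁻¹
      = U * diagonal (fun i => (μ i + κ)⁻¹) * star U := by
    apply Matrix.inv_eq_right_inv
    rw [hAκ]
    simp only [← Matrix.mul_assoc]
    rw [Matrix.mul_assoc (U * diagonal fun i => μ i + κ) (star U) U, hUU', Matrix.mul_one]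
    rw [Matrix.mul_assoc U, Matrix.diagonal_mul_diagonal]
    have : (fun i => (μ i + κ) * (μ i + κ)⁻¹) = fun _ => (1:ℝ) := by
      funext i; exact mul_inv_cancel₀ (hpos i).ne'
    rw [this, Matrix.diagonal_one, Matrix.mul_one, hUU]
  congr 1
  rw [hinv, hspec]
  simp only [← Matrix.mul_assoc]
  rw [Matrix.mul_assoc (U * diagonal μ) (star U) U, hUU', Matrix.mul_one]
  rw [Matrix.mul_assoc U, Matrix.diagonal_mul_diagonal]
  rw [Matrix.trace_mul_cycle, hUU', Matrix.one_mul, Matrix.trace_diagonal]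
  simp [div_eq_mul_inv]

lemma trace_eq_sum_eig (A : Matrix (Fin n) (Fin n) ℝ) (hA : A.IsHermitian) :
    A.trace = ∑ i, hA.eigenvalues i := by
  classical
  have hspec : A = (hA.eigenvectorUnitary : Matrix (Fin n) (Fin n) ℝ)
      * diagonal hA.eigenvalues * star (hA.eigenvectorUnitary : Matrix (Fin n) (Fin n) ℝ) := by
    simpa using hA.spectral_theorem
  have hUU' : star (hA.eigenvectorUnitary : Matrix (Fin n) (Fin n) ℝ)
      * (hA.eigenvectorUnitary : Matrix (Fin n) (Fin n) ℝ) = 1 :=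
    (Matrix.mem_unitaryGroup_iff').mp hA.eigenvectorUnitary.2
  conv_lhs => rw [hspec]
  rw [Matrix.trace_mul_cycle, hUU', Matrix.one_mul, Matrix.trace_diagonal]

end helpers

/-- the renormalized ridge for correlated samples is at least the
renormalized ridge for uncorrelated samples: `κ_c ≥ κ_u`. -/
theorem stmt3 {N T : ℕ} (Sg : Matrix (Fin N) (Fin N) ℝ) (hSg : Sg.PosSemidef)
    (hSg0 : Sg ≠ 0)
    (K : Matrix (Fin T) (Fin T) ℝ) (hK : K.PosDef)
    (htr : (1 / (T : ℝ)) * K.trace = 1)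
    (q lam κc κtc κu : ℝ) (hq : 0 < q) (hlam : 0 < lam)
    (hκc : 0 < κc) (hκtc : 0 < κtc)
    (h1 : df1 K κtc = q * df1 Sg κc)
    (h2 : κc * κtc * (q * df1 Sg κc) = lam)
    (hκu : 0 < κu) (h3 : κu * (1 - q * df1 Sg κu) = lam) :
    κu ≤ κc := by
  classical
  -- T > 0
  have hT : 0 < T := by
    by_contra h
    push_neg at h
    interval_cases T
    simp at htr
  -- Jensen: df1 K κtc ≤ 1/(1+κtc)
  have hKtr : ∑ i, hK.1.eigenvalues i = (T : ℝ) := by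
    have := trace_eq_sum_eig K hK.1
    have hT' : (T : ℝ) ≠ 0 := Nat.cast_ne_zero.mpr hT.ne'
    field_simp at htr
    rw [this] at htr
    linarith [htr]
  have hjensen : df1 K κtc ≤ 1 / (1 + κtc) := by
    rw [df1, df1_eq_sum_s3 K hK.posSemidef hκtc]
    have hterm : ∀ i : Fin T, hK.1.eigenvalues i / (hK.1.eigenvalues i + κtc)
        ≤ 1 / (1 + κtc) + κtc * (hK.1.eigenvalues i - 1) / (1 + κtc)^2 := by
      intro i
      have hν : 0 ≤ hK.1.eigenvalues i := hK.posSemidef.eigenvalues_nonneg i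
      have h1' : 0 < hK.1.eigenvalues i + κtc := by linarith
      have h2' : 0 < 1 + κtc := by linarith
      rw [div_add_div _ _ h2'.ne' (pow_ne_zero 2 h2'.ne'), div_le_div_iff₀ h1' (by positivity)]
      nlinarith [mul_nonneg (mul_nonneg hκtc.le (sq_nonneg (hK.1.eigenvalues i - 1))) h2'.le]
    have hsum : ∑ i, hK.1.eigenvalues i / (hK.1.eigenvalues i + κtc)
        ≤ ∑ i : Fin T, (1 / (1 + κtc) + κtc * (hK.1.eigenvalues i - 1) / (1 + κtc)^2) :=
      Finset.sum_le_sum fun i _ => hterm i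
    have hrhs : ∑ i : Fin T, (1 / (1 + κtc) + κtc * (hK.1.eigenvalues i - 1) / (1 + κtc)^2)
        = (T : ℝ) / (1 + κtc) := by
      rw [Finset.sum_add_distrib]
      rw [Finset.sum_const, Finset.card_univ, Fintype.card_fin]
      rw [← Finset.sum_div]
      have : ∑ i : Fin T, κtc * (hK.1.eigenvalues i - 1) = 0 := by
        rw [← Finset.mul_sum, Finset.sum_sub_distrib, hKtr]
        simp
      rw [this]
      simp [div_eq_mul_inv, mul_comm]
    have hT' : (0:ℝ) < (T : ℝ) := Nat.cast_pos.mpr hT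
    calc (1 / (T:ℝ)) * ∑ i, hK.1.eigenvalues i / (hK.1.eigenvalues i + κtc)
        ≤ (1 / (T:ℝ)) * ((T : ℝ) / (1 + κtc)) := by
          apply mul_le_mul_of_nonneg_left _ (by positivity)
          rw [← hrhs]; exact hsum
      _ = 1 / (1 + κtc) := by field_simp
  -- monotonicity of df1 Sg
  have hmono : df1 Sg κu ≤ df1 Sg κc ∨ κu ≤ κc := by
    rcases le_or_gt κu κc with h | h
    · right; exact h
    · left
      rw [df1, df1, df1_eq_sum_s3 Sg hSg hκc, df1_eq_sum_s3 Sg hSg hκu]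
      apply mul_le_mul_of_nonneg_left _ (by positivity)
      apply Finset.sum_le_sum
      intro i _
      have hσ : 0 ≤ hSg.1.eigenvalues i := hSg.eigenvalues_nonneg i
      apply div_le_div_of_nonneg_left hσ (by linarith) (by linarith)
  rcases hmono with hmono | h
  · -- main argument
    set a := q * df1 Sg κc with ha
    set b := q * df1 Sg κu with hb
    have hba : b ≤ a := by
      apply mul_le_mul_of_nonneg_left hmono hq.le
    have ha_pos : 0 < a := by
      have : 0 < κc * κtc := by positivity
      nlinarith
    have hle : a * (1 + κtc) ≤ 1 := by
      have h1κ : 0 < 1 + κtc := by linarith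
      have := hjensen
      rw [h1] at this
      calc a * (1 + κtc) ≤ (1 / (1 + κtc)) * (1 + κtc) := by
            apply mul_le_mul_of_nonneg_right this h1κ.le
        _ = 1 := by field_simp
    -- lam ≤ κc * (1 - a)
    have hkey : lam ≤ κc * (1 - a) := by
      nlinarith
    have h1b : 0 < 1 - b := by
      have : κu * (1 - b) = lam := h3
      nlinarith
    nlinarith
  · exact h
end

section
/- Let Σ be a nonzero real symmetric positive-semidefinite N×N matrix, let K be a real symmetric positive-definite T×T matrix with (1/T)·Tr(K) = 1, and let q > 0 and λ > 0. Suppose κ_c > 0 and κ̃_c > 0 satisfy df¹_K(κ̃_c) = q·df¹_Σ(κ_c) and κ_c·κ̃_c·q·df¹_Σ(κ_c) = λ, and suppose κ_u > 0 satisfies κ_u·(1 − q·df¹_Σ(κ_u)) = λ. Then df¹_Σ(κ_c) ≤ df¹_Σ(κ_u): the presence of correlations decreases (or keeps constant) the first degrees of freedom. -/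
/-!
Since `Tr K / T = 1` and `x ↦ x / (x + κ)` is concave, Jensen's inequality gives
`df¹_K(κ̃) ≤ 1 / (1 + κ̃)`, which turns the two equations for `(κ_c, κ̃_c)` into
`λ ≤ κ_c (1 - q df¹_Σ(κ_c))`. As `df¹_Σ` is decreasing in `κ`, `df¹_Σ(κ_c) > df¹_Σ(κ_u)` would force
`κ_c < κ_u` and then `κ_c (1 - q df¹_Σ(κ_c)) < κ_u (1 - q df¹_Σ(κ_u)) = λ`, a contradiction.
-/

open Matrix

namespace Matrix.IsHermitian

variable {n : Type*} [Fintype n] [DecidableEq n]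

lemma trace_cfc {𝕜 : Type*} [RCLike 𝕜] {A : Matrix n n 𝕜} (hA : A.IsHermitian) (f : ℝ → ℝ) :
    (cfc f A).trace = ∑ i, (f (hA.eigenvalues i) : 𝕜) := by
  rw [hA.cfc_eq, IsHermitian.cfc, Unitary.conjStarAlgAut_apply, trace_mul_cycle,
    Unitary.coe_star_mul_self, one_mul, trace_diagonal]
  rfl

lemma mul_inv_add_smul_one_eq_cfc {A : Matrix n n ℝ} (hA : A.IsHermitian) {κ : ℝ}
    (hκ : ∀ i, hA.eigenvalues i + κ ≠ 0) :
    A * (A + κ • 1)⁻¹ = cfc (fun x => x / (x + κ)) A := by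
  have hsa : IsSelfAdjoint A := hA
  have hspec : ∀ x ∈ spectrum ℝ A, x + κ ≠ 0 := by
    rw [hA.spectrum_real_eq_range_eigenvalues]
    rintro - ⟨i, rfl⟩
    exact hκ i
  rw [cfc_map_div _ _ A hspec, cfc_id' ℝ A, cfc_add_const .., cfc_id' ℝ A,
    Algebra.algebraMap_eq_smul_one, nonsing_inv_eq_ringInverse]

end Matrix.IsHermitian

lemma df1_eq_sum_eigenvalues {n : ℕ} {A : Matrix (Fin n) (Fin n) ℝ} (hA : A.IsHermitian) {κ : ℝ}
    (hκ : ∀ i, hA.eigenvalues i + κ ≠ 0) :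
    df1 A κ = 1 / n * ∑ i, hA.eigenvalues i / (hA.eigenvalues i + κ) := by
  rw [df1, hA.mul_inv_add_smul_one_eq_cfc hκ, hA.trace_cfc]
  rfl

section PosSemidef

variable {n : ℕ} {A : Matrix (Fin n) (Fin n) ℝ}

lemma df1_eq_sum_eigenvalues_of_posSemidef (hA : A.PosSemidef) {κ : ℝ} (hκ : 0 < κ) :
    df1 A κ = 1 / n * ∑ i, hA.1.eigenvalues i / (hA.1.eigenvalues i + κ) :=
  df1_eq_sum_eigenvalues hA.1 fun i => (add_pos_of_nonneg_of_pos (hA.eigenvalues_nonneg i) hκ).ne'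

lemma df1_antitoneOn (hA : A.PosSemidef) : AntitoneOn (df1 A) (Set.Ioi 0) := by
  intro κ₁ hκ₁ κ₂ hκ₂ h
  rw [df1_eq_sum_eigenvalues_of_posSemidef hA hκ₁, df1_eq_sum_eigenvalues_of_posSemidef hA hκ₂]
  gcongr with i
  · exact hA.eigenvalues_nonneg i
  · exact add_pos_of_nonneg_of_pos (hA.eigenvalues_nonneg i) hκ₁

-- The tangent line at `x = 1` of the concave map `x ↦ x / (x + κ)`.
lemma div_add_le_tangent_at_one {x κ : ℝ} (hx : 0 ≤ x) (hκ : 0 < κ) :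
    x / (x + κ) ≤ (1 + κ * x) / (1 + κ) ^ 2 := by
  rw [div_le_div_iff₀ (by positivity) (by positivity)]
  nlinarith [mul_nonneg hκ.le (sq_nonneg (x - 1))]

lemma df1_le_one_div_one_add (hA : A.PosSemidef) (htr : 1 / (n : ℝ) * A.trace = 1) {κ : ℝ}
    (hκ : 0 < κ) : df1 A κ ≤ 1 / (1 + κ) := by
  have hn : (n : ℝ) ≠ 0 := by
    rintro hn
    simp [hn] at htr
  have hsum : ∑ i, hA.1.eigenvalues i = n := by
    rw [hA.1.trace_eq_sum_eigenvalues] at htr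
    field_simp at htr
    simpa using htr
  calc df1 A κ = 1 / n * ∑ i, hA.1.eigenvalues i / (hA.1.eigenvalues i + κ) :=
        df1_eq_sum_eigenvalues_of_posSemidef hA hκ
    _ ≤ 1 / n * ∑ i, (1 + κ * hA.1.eigenvalues i) / (1 + κ) ^ 2 := by
        gcongr 1 / (n : ℝ) * ∑ i, ?_ with i
        exact div_add_le_tangent_at_one (hA.eigenvalues_nonneg i) hκ
    _ = 1 / (1 + κ) := by
        rw [← Finset.sum_div, Finset.sum_add_distrib, ← Finset.mul_sum, hsum]
        simp only [Finset.sum_const, Finset.card_univ, Fintype.card_fin, nsmul_eq_mul, mul_one]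
        field_simp

end PosSemidef

theorem stmt4_general {N T : ℕ} (Sg : Matrix (Fin N) (Fin N) ℝ) (hSg : Sg.PosSemidef)
    (K : Matrix (Fin T) (Fin T) ℝ) (hK : K.PosDef)
    (htr : (1 / (T : ℝ)) * K.trace = 1)
    (q lam κc κtc κu : ℝ) (hq : 0 < q) (hlam : 0 < lam)
    (hκc : 0 < κc) (hκtc : 0 < κtc)
    (h1 : df1 K κtc = q * df1 Sg κc)
    (h2 : κc * κtc * (q * df1 Sg κc) = lam)
    (hκu : 0 < κu) (h3 : κu * (1 - q * df1 Sg κu) = lam) :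
    df1 Sg κc ≤ df1 Sg κu := by
  set dc := df1 Sg κc
  set du := df1 Sg κu
  have hqdc : 0 < q * dc := pos_of_mul_pos_right (h2 ▸ hlam) (by positivity)
  have hK_bound : q * dc * (1 + κtc) ≤ 1 := by
    rw [← h1, ← le_div_iff₀ (by positivity)]
    exact df1_le_one_div_one_add hK.posSemidef htr hκtc
  have hlam_le : lam ≤ κc * (1 - q * dc) := by
    rw [← h2]
    nlinarith
  have hgap : 0 < 1 - q * dc := by nlinarith
  refine le_of_not_gt fun hlt => ?_
  have hκ_lt : κc < κu :=
    lt_of_not_ge fun hle => (df1_antitoneOn hSg hκu hκc hle).not_gt hlt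
  have hlam_lt : lam < lam :=
    calc lam ≤ κc * (1 - q * dc) := hlam_le
      _ < κu * (1 - q * dc) := by gcongr
      _ < κu * (1 - q * du) := by gcongr
      _ = lam := h3
  exact lt_irrefl lam hlam_lt

/-- the presence of correlations decreases (or keeps constant) the first
degrees of freedom: `df¹_Σ(κ_c) ≤ df¹_Σ(κ_u)`. -/
theorem stmt4 {N T : ℕ} (Sg : Matrix (Fin N) (Fin N) ℝ) (hSg : Sg.PosSemidef)
    (hSg0 : Sg ≠ 0)
    (K : Matrix (Fin T) (Fin T) ℝ) (hK : K.PosDef)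
    (htr : (1 / (T : ℝ)) * K.trace = 1)
    (q lam κc κtc κu : ℝ) (hq : 0 < q) (hlam : 0 < lam)
    (hκc : 0 < κc) (hκtc : 0 < κtc)
    (h1 : df1 K κtc = q * df1 Sg κc)
    (h2 : κc * κtc * (q * df1 Sg κc) = lam)
    (hκu : 0 < κu) (h3 : κu * (1 - q * df1 Sg κu) = lam) :
    df1 Sg κc ≤ df1 Sg κu :=
  stmt4_general Sg hSg K hK htr q lam κc κtc κu hq hlam hκc hκtc h1 h2 hκu h3
end

section
/- Let K be a real symmetric positive-definite T×T matrix. For every κ̃ ≥ 0, (1/T)·Tr(K(K + κ̃I)⁻²) ≤ ((1/T)·Tr(K⁻¹)) · ((1/T)·Tr(K²(K + κ̃I)⁻²)), with equality when κ̃ = 0. -/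
/-!
Diagonalising `K = U diag(ρ) Uᴴ`, the three traces become `∑ ρᵢ / (ρᵢ + κ)²`, `∑ ρᵢ⁻¹` and
`∑ ρᵢ² / (ρᵢ + κ)²`. The first is the sum of the products of the other two summands, and since
`ρ ↦ ρ⁻¹` decreases while `ρ ↦ ρ² / (ρ + κ)²` increases on `(0, ∞)`, Chebyshev's sum inequality
bounds its mean by the product of their means. At `κ = 0` the second factor is constantly `1`,
so equality holds.
-/

open Matrix Unitary

namespace Matrix

variable {n : Type*} [Fintype n] [DecidableEq n]

lemma map_nonsing_inv {R F : Type*} [CommRing R] [EquivLike F (Matrix n n R) (Matrix n n R)]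
    [RingEquivClass F (Matrix n n R) (Matrix n n R)] (f : F) (A : Matrix n n R) :
    f A⁻¹ = (f A)⁻¹ := by
  by_cases hA : IsUnit A
  · refine (inv_eq_left_inv ?_).symm
    rw [← map_mul, nonsing_inv_mul _ ((isUnit_iff_isUnit_det A).mp hA), map_one]
  · rw [nonsing_inv_eq_ringInverse, nonsing_inv_eq_ringInverse, Ring.inverse_non_unit _ hA,
      Ring.inverse_non_unit _ ((isUnit_map_iff f A).not.mpr hA), map_zero]

lemma trace_conjStarAlgAut {R S : Type*} [CommRing R] [StarRing R] [CommSemiring S]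
    [Algebra S R] (u : unitary (Matrix n n R)) (A : Matrix n n R) :
    (conjStarAlgAut S _ u A).trace = A.trace := by
  rw [conjStarAlgAut_apply, trace_mul_cycle, Unitary.coe_star_mul_self, one_mul]

lemma inv_diagonal_of_ne_zero {K : Type*} [Field K] {v : n → K} (hv : ∀ i, v i ≠ 0) :
    (diagonal v)⁻¹ = diagonal v⁻¹ :=
  inv_eq_left_inv <| by
    rw [diagonal_mul_diagonal, ← diagonal_one]
    exact congrArg diagonal (funext fun i => inv_mul_cancel₀ (hv i))

lemma trace_conjStarAlgAut_diagonal_pow_mul_inv_add_smul_one_pow {K : Type*} [Field K]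
    [StarRing K] (u : unitary (Matrix n n K)) {d : n → K} {κ : K} (hκ : ∀ i, d i + κ ≠ 0)
    (p q : ℕ) :
    (conjStarAlgAut K _ u (diagonal d) ^ p *
        ((conjStarAlgAut K _ u (diagonal d) + κ • 1)⁻¹) ^ q).trace =
      ∑ i, d i ^ p / (d i + κ) ^ q := by
  rw [← map_one (conjStarAlgAut K _ u), ← map_smul, ← map_add, smul_one_eq_diagonal,
    diagonal_add, ← map_nonsing_inv, inv_diagonal_of_ne_zero hκ, ← map_pow, ← map_pow, ← map_mul,
    trace_conjStarAlgAut, diagonal_pow, diagonal_pow, diagonal_mul_diagonal, trace_diagonal]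
  simp [div_eq_mul_inv]

lemma IsHermitian.trace_pow_mul_inv_add_smul_one_pow {A : Matrix n n ℝ} (hA : A.IsHermitian)
    {κ : ℝ} (hκ : ∀ i, hA.eigenvalues i + κ ≠ 0) (p q : ℕ) :
    (A ^ p * ((A + κ • 1)⁻¹) ^ q).trace =
      ∑ i, hA.eigenvalues i ^ p / (hA.eigenvalues i + κ) ^ q := by
  conv_lhs => rw [hA.spectral_theorem]
  simpa using
    trace_conjStarAlgAut_diagonal_pow_mul_inv_add_smul_one_pow hA.eigenvectorUnitary hκ p q

end Matrix

lemma antivary_comp_of_antitoneOn_of_monotoneOn {ι α β γ : Type*} [LinearOrder α]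
    [PartialOrder β] [LinearOrder γ] {x : ι → α} {s : Set α} {u : α → β} {v : α → γ}
    (hx : ∀ i, x i ∈ s) (hu : AntitoneOn u s) (hv : MonotoneOn v s) :
    Antivary (u ∘ x) (v ∘ x) := fun i j hij =>
  hu (hx i) (hx j) (lt_of_not_ge fun h => hij.not_ge (hv (hx j) (hx i) h)).le

lemma Antivary.mean_mul_le_mean_mul_mean {ι : Type*} [Fintype ι] {f g : ι → ℝ}
    (hfg : Antivary f g) :
    (1 / Fintype.card ι : ℝ) * ∑ i, f i * g i ≤
      ((1 / Fintype.card ι : ℝ) * ∑ i, f i) * ((1 / Fintype.card ι : ℝ) * ∑ i, g i) := by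
  have h := mul_le_mul_of_nonneg_left hfg.card_mul_sum_le_sum_mul_sum
    (sq_nonneg (1 / Fintype.card ι : ℝ))
  rcases (Fintype.card ι).eq_zero_or_pos with hι | hι
  · simp [hι]
  · calc (1 / Fintype.card ι : ℝ) * ∑ i, f i * g i
        = (1 / Fintype.card ι : ℝ) ^ 2 * (Fintype.card ι * ∑ i, f i * g i) := by
          field_simp
      _ ≤ _ := h
      _ = _ := by ring

lemma monotoneOn_sq_div_add_sq {κ : ℝ} (hκ : 0 ≤ κ) :
    MonotoneOn (fun ρ : ℝ => ρ ^ 2 / (ρ + κ) ^ 2) (Set.Ioi 0) := by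
  intro a (ha : 0 < a) b (hb : 0 < b) hab
  have hfrac : a / (a + κ) ≤ b / (b + κ) := by
    rw [div_le_div_iff₀ (by positivity) (by positivity)]
    nlinarith
  simpa only [div_pow] using pow_le_pow_left₀ (by positivity) hfrac 2

/-- For symmetric positive-definite `K` and every `κ̃ ≥ 0`,
`(1/T)·Tr(K(K + κ̃I)⁻²) ≤ ((1/T)·Tr(K⁻¹)) · ((1/T)·Tr(K²(K + κ̃I)⁻²))`,
with equality when `κ̃ = 0`. -/
theorem stmt7 {T : ℕ} (K : Matrix (Fin T) (Fin T) ℝ) (hK : K.PosDef) :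
    (∀ κ : ℝ, 0 ≤ κ →
      (1 / (T : ℝ)) * (K * ((K + κ • (1 : Matrix (Fin T) (Fin T) ℝ))⁻¹) ^ 2).trace ≤
        ((1 / (T : ℝ)) * K⁻¹.trace) *
          ((1 / (T : ℝ)) * (K ^ 2 * ((K + κ • (1 : Matrix (Fin T) (Fin T) ℝ))⁻¹) ^ 2).trace)) ∧
    (1 / (T : ℝ)) * (K * ((K + (0 : ℝ) • (1 : Matrix (Fin T) (Fin T) ℝ))⁻¹) ^ 2).trace =
      ((1 / (T : ℝ)) * K⁻¹.trace) *
        ((1 / (T : ℝ)) * (K ^ 2 * ((K + (0 : ℝ) • (1 : Matrix (Fin T) (Fin T) ℝ))⁻¹) ^ 2).trace) := by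
  set ρ := hK.1.eigenvalues
  have hρ : ∀ i, 0 < ρ i := hK.eigenvalues_pos
  have htrace : ∀ κ : ℝ, 0 ≤ κ → ∀ p q : ℕ,
      (K ^ p * ((K + κ • 1)⁻¹) ^ q).trace = ∑ i, ρ i ^ p / (ρ i + κ) ^ q := fun κ hκ =>
    hK.1.trace_pow_mul_inv_add_smul_one_pow fun i => (add_pos_of_pos_of_nonneg (hρ i) hκ).ne'
  have hinv : K⁻¹.trace = ∑ i, (ρ i)⁻¹ := by simpa using htrace 0 le_rfl 0 1
  have hKtrace : ∀ κ : ℝ, 0 ≤ κ →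
      (K * ((K + κ • 1)⁻¹) ^ 2).trace = ∑ i, (ρ i)⁻¹ * (ρ i ^ 2 / (ρ i + κ) ^ 2) :=
    fun κ hκ => by
      simpa only [pow_one] using (htrace κ hκ 1 2).trans
        (Finset.sum_congr rfl fun i _ => by field_simp [(hρ i).ne'])
  refine ⟨fun κ hκ => ?_, ?_⟩
  · rw [hKtrace κ hκ, htrace κ hκ, hinv]
    simpa using (antivary_comp_of_antitoneOn_of_monotoneOn hρ inv_antitoneOn_Ioi
      (monotoneOn_sq_div_add_sq hκ)).mean_mul_le_mean_mul_mean
  · have hone : ∀ i, ρ i ^ 2 / (ρ i + 0) ^ 2 = 1 := fun i => by simp [(hρ i).ne']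
    rw [hKtrace 0 le_rfl, htrace 0 le_rfl, hinv]
    simp only [hone, mul_one, Finset.sum_const, Finset.card_univ, Fintype.card_fin, nsmul_eq_mul]
    rcases T.eq_zero_or_pos with hT | hT
    · simp [hT]
    · field_simp
end

section
/- Let Σ be a nonzero real symmetric positive-semidefinite N×N matrix, K a nonzero real symmetric positive-semidefinite T×T matrix, and q > 0. Suppose κ, κ̃ : (0,∞) → (0,∞) are differentiable functions satisfying df¹_K(κ̃(λ)) = q·df¹_Σ(κ(λ)) for all λ > 0. Then for every λ > 0: q·(df¹_Σ(κ(λ)) − df²_Σ(κ(λ)))·κ̃(λ)·κ′(λ) = (df¹_K(κ̃(λ)) − df²_K(κ̃(λ)))·κ(λ)·κ̃′(λ). -/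
/-!
In an eigenbasis of `A`, `df¹_A(κ) = (1/n) ∑ μᵢ/(μᵢ+κ)` and `df²_A(κ) = (1/n) ∑ (μᵢ/(μᵢ+κ))²`.
Since `x/(x+κ) - (x/(x+κ))² = κx/(x+κ)² = -κ ∂_κ (x/(x+κ))`, this gives
`κ ∂_κ df¹_A = -(df¹_A - df²_A)`. Differentiating `df¹_K(κ̃(λ)) = q df¹_Σ(κ(λ))` in `λ` by the
chain rule and clearing the denominators `κ`, `κ̃` yields the identity.
-/

open Matrix

open Unitary Filter Topology

theorem Matrix.trace_conjStarAlgAut_s12 {n R : Type*} [Fintype n] [DecidableEq n] [CommRing R]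
    [StarRing R] (u : unitary (Matrix n n R)) (X : Matrix n n R) :
    (conjStarAlgAut R _ u X).trace = X.trace := by
  rw [conjStarAlgAut_apply, trace_mul_cycle, Unitary.coe_star_mul_self, one_mul]

namespace Matrix.IsHermitian

variable {n : Type*} [Fintype n] [DecidableEq n] {A : Matrix n n ℝ} (hA : A.IsHermitian)

theorem eq_conjStarAlgAut_diagonal :
    A = conjStarAlgAut ℝ _ hA.eigenvectorUnitary (diagonal hA.eigenvalues) := by
  simpa using hA.spectral_theorem

theorem add_smul_one_eq (κ : ℝ) :
    A + κ • 1 = conjStarAlgAut ℝ _ hA.eigenvectorUnitary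
      (diagonal fun i => hA.eigenvalues i + κ) := by
  rw [← diagonal_add, ← smul_one_eq_diagonal, map_add, map_smul, map_one,
    ← hA.eq_conjStarAlgAut_diagonal]

theorem inv_add_smul_one_eq {κ : ℝ} (hκ : ∀ i, hA.eigenvalues i + κ ≠ 0) :
    (A + κ • 1)⁻¹ = conjStarAlgAut ℝ _ hA.eigenvectorUnitary
      (diagonal fun i => (hA.eigenvalues i + κ)⁻¹) := by
  refine inv_eq_right_inv ?_
  rw [hA.add_smul_one_eq, ← map_mul, diagonal_mul_diagonal]
  simp [hκ]

theorem trace_mul_inv_add_smul_one {κ : ℝ} (hκ : ∀ i, hA.eigenvalues i + κ ≠ 0) :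
    (A * (A + κ • 1)⁻¹).trace = ∑ i, hA.eigenvalues i / (hA.eigenvalues i + κ) := by
  conv_lhs => enter [1, 1]; rw [hA.eq_conjStarAlgAut_diagonal]
  rw [hA.inv_add_smul_one_eq hκ, ← map_mul, trace_conjStarAlgAut_s12, diagonal_mul_diagonal,
    trace_diagonal]
  simp only [div_eq_mul_inv]

theorem trace_sq_mul_inv_add_smul_one_sq {κ : ℝ} (hκ : ∀ i, hA.eigenvalues i + κ ≠ 0) :
    (A ^ 2 * ((A + κ • 1)⁻¹) ^ 2).trace =
      ∑ i, (hA.eigenvalues i / (hA.eigenvalues i + κ)) ^ 2 := by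
  conv_lhs => enter [1, 1, 1]; rw [hA.eq_conjStarAlgAut_diagonal]
  rw [hA.inv_add_smul_one_eq hκ, ← map_pow, ← map_pow, ← map_mul, trace_conjStarAlgAut_s12,
    diagonal_pow, diagonal_pow, diagonal_mul_diagonal, trace_diagonal]
  simp only [Pi.pow_apply, div_eq_mul_inv, mul_pow]

end Matrix.IsHermitian

theorem hasDerivAt_const_div_const_add {μ κ : ℝ} (hμκ : μ + κ ≠ 0) (hκ : κ ≠ 0) :
    HasDerivAt (fun t => μ / (μ + t)) (-(μ / (μ + κ) - (μ / (μ + κ)) ^ 2) / κ) κ := by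
  refine ((hasDerivAt_const κ μ).div ((hasDerivAt_id' κ).const_add μ) hμκ).congr_deriv ?_
  field_simp
  ring

namespace Matrix.PosSemidef

variable {n : ℕ} {A : Matrix (Fin n) (Fin n) ℝ}

theorem eigenvalues_add_ne_zero (hA : A.PosSemidef) {κ : ℝ} (hκ : 0 < κ) (i : Fin n) :
    hA.isHermitian.eigenvalues i + κ ≠ 0 :=
  (add_pos_of_nonneg_of_pos (hA.eigenvalues_nonneg i) hκ).ne'

theorem df1_eq_sum (hA : A.PosSemidef) {κ : ℝ} (hκ : 0 < κ) :
    df1 A κ = 1 / n * ∑ i, hA.isHermitian.eigenvalues i / (hA.isHermitian.eigenvalues i + κ) := by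
  rw [df1, hA.isHermitian.trace_mul_inv_add_smul_one (hA.eigenvalues_add_ne_zero hκ)]

theorem df2_eq_sum (hA : A.PosSemidef) {κ : ℝ} (hκ : 0 < κ) :
    df2 A κ =
      1 / n * ∑ i, (hA.isHermitian.eigenvalues i / (hA.isHermitian.eigenvalues i + κ)) ^ 2 := by
  rw [df2, hA.isHermitian.trace_sq_mul_inv_add_smul_one_sq (hA.eigenvalues_add_ne_zero hκ)]

theorem hasDerivAt_df1 (hA : A.PosSemidef) {κ : ℝ} (hκ : 0 < κ) :
    HasDerivAt (df1 A) (-(df1 A κ - df2 A κ) / κ) κ := by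
  set μ := hA.isHermitian.eigenvalues
  have hsum : HasDerivAt (fun t => 1 / n * ∑ i, μ i / (μ i + t))
      (1 / n * ∑ i, -(μ i / (μ i + κ) - (μ i / (μ i + κ)) ^ 2) / κ) κ :=
    (HasDerivAt.fun_sum fun i _ =>
      hasDerivAt_const_div_const_add (hA.eigenvalues_add_ne_zero hκ i) hκ.ne').const_mul _
  have hdf1 : df1 A =ᶠ[𝓝 κ] fun t => 1 / n * ∑ i, μ i / (μ i + t) := by
    filter_upwards [eventually_gt_nhds hκ] with t ht using hA.df1_eq_sum ht
  refine (hsum.congr_of_eventuallyEq hdf1).congr_deriv ?_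
  rw [hA.df1_eq_sum hκ, hA.df2_eq_sum hκ, ← Finset.sum_div, Finset.sum_neg_distrib,
    Finset.sum_sub_distrib]
  ring

end Matrix.PosSemidef

theorem stmt12_general {N T : ℕ} (Sg : Matrix (Fin N) (Fin N) ℝ) (hSg : Sg.PosSemidef)
    (K : Matrix (Fin T) (Fin T) ℝ) (hK : K.PosSemidef)
    (q : ℝ)
    (k kt : ℝ → ℝ)
    (hkpos : ∀ lam : ℝ, 0 < lam → 0 < k lam)
    (hktpos : ∀ lam : ℝ, 0 < lam → 0 < kt lam)
    (hkdiff : ∀ lam : ℝ, 0 < lam → DifferentiableAt ℝ k lam)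
    (hktdiff : ∀ lam : ℝ, 0 < lam → DifferentiableAt ℝ kt lam)
    (hmatch : ∀ lam : ℝ, 0 < lam → df1 K (kt lam) = q * df1 Sg (k lam)) :
    ∀ lam : ℝ, 0 < lam →
      q * (df1 Sg (k lam) - df2 Sg (k lam)) * kt lam * deriv k lam =
        (df1 K (kt lam) - df2 K (kt lam)) * k lam * deriv kt lam := by
  intro lam hlam
  have hk := hkpos lam hlam
  have hkt := hktpos lam hlam
  have hdK : HasDerivAt (fun l => df1 K (kt l))
      (-(df1 K (kt lam) - df2 K (kt lam)) / kt lam * deriv kt lam) lam :=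
    (hK.hasDerivAt_df1 hkt).comp lam (hktdiff lam hlam).hasDerivAt
  have hdSg : HasDerivAt (fun l => q * df1 Sg (k l))
      (q * (-(df1 Sg (k lam) - df2 Sg (k lam)) / k lam * deriv k lam)) lam :=
    ((hSg.hasDerivAt_df1 hk).comp lam (hkdiff lam hlam).hasDerivAt).const_mul q
  have hmatch_nhds : (fun l => df1 K (kt l)) =ᶠ[𝓝 lam] fun l => q * df1 Sg (k l) := by
    filter_upwards [eventually_gt_nhds hlam] with l hl using hmatch l hl
  have h := hdK.unique (hdSg.congr_of_eventuallyEq hmatch_nhds)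
  field_simp at h
  linarith

/-- if differentiable `κ, κ̃ : (0,∞) → (0,∞)` satisfy
`df¹_K(κ̃(λ)) = q·df¹_Σ(κ(λ))` for all `λ > 0`, then for every `λ > 0`:
`q·(df¹_Σ(κ(λ)) − df²_Σ(κ(λ)))·κ̃(λ)·κ′(λ) = (df¹_K(κ̃(λ)) − df²_K(κ̃(λ)))·κ(λ)·κ̃′(λ)`. -/
theorem stmt12 {N T : ℕ} (Sg : Matrix (Fin N) (Fin N) ℝ) (hSg : Sg.PosSemidef)
    (hSg0 : Sg ≠ 0)
    (K : Matrix (Fin T) (Fin T) ℝ) (hK : K.PosSemidef) (hK0 : K ≠ 0)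
    (q : ℝ) (hq : 0 < q)
    (k kt : ℝ → ℝ)
    (hkpos : ∀ lam : ℝ, 0 < lam → 0 < k lam)
    (hktpos : ∀ lam : ℝ, 0 < lam → 0 < kt lam)
    (hkdiff : ∀ lam : ℝ, 0 < lam → DifferentiableAt ℝ k lam)
    (hktdiff : ∀ lam : ℝ, 0 < lam → DifferentiableAt ℝ kt lam)
    (hmatch : ∀ lam : ℝ, 0 < lam → df1 K (kt lam) = q * df1 Sg (k lam)) :
    ∀ lam : ℝ, 0 < lam →
      q * (df1 Sg (k lam) - df2 Sg (k lam)) * kt lam * deriv k lam =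
        (df1 K (kt lam) - df2 K (kt lam)) * k lam * deriv kt lam :=
  stmt12_general Sg hSg K hK q k kt hkpos hktpos hkdiff hktdiff hmatch
end

section
/- Let Σ be a nonzero real symmetric positive-semidefinite N×N matrix, K a real symmetric positive-definite T×T matrix, and q > 0. Suppose κ, κ̃ : (0,∞) → (0,∞) are differentiable functions satisfying, for all λ > 0, both df¹_K(κ̃(λ)) = q·df¹_Σ(κ(λ)) and κ(λ)·κ̃(λ)·q·df¹_Σ(κ(λ)) = λ. Then for every λ > 0, writing df₁ = df¹_Σ(κ(λ)), df₂ = df²_Σ(κ(λ)), df̃₁ = df¹_K(κ̃(λ)), df̃₂ = df²_K(κ̃(λ)), and γ = (df₂/df₁)·(df̃₂/df̃₁), one has κ′(λ) = (κ(λ)/λ) · (1 − df̃₂/df̃₁)/(1 − γ). -/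
open Matrix

/-! Differentiating the matching and duality relations in `λ` gives two linear equations for
`κ′` and `κ̃′`, because `d/dκ df¹_A(κ) = (df²_A(κ) - df¹_A(κ))/κ`; both this and the identity
`df¹_A(κ) - df²_A(κ) = (κ/n)·Tr(A(A + κI)⁻²)` come from `A(A + κI)⁻¹ = I - κ(A + κI)⁻¹`.
Eliminating `κ̃′` leaves `κ′·κ̃·(q·df₂·df̃₂ - df̃₁²) = df̃₂ - df̃₁`, whose right-hand side is
nonzero because `K` is positive definite; the claimed formula is this equation solved for `κ′`,
after `λ = κ·κ̃·df̃₁`. -/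

section Resolvent

variable {m : Type*} [DecidableEq m] {A : Matrix m m ℝ} {κ : ℝ}

lemma Matrix.PosSemidef.posDef_add_smul_one (hA : A.PosSemidef) (hκ : 0 < κ) :
    (A + κ • 1).PosDef :=
  PosDef.posSemidef_add hA <| by simpa [smul_one_eq_diagonal] using PosDef.diagonal fun _ => hκ

attribute [local instance] Matrix.linftyOpNormedRing Matrix.linftyOpNormedAlgebra in
lemma hasDerivAt_inv_add_smul_one [Fintype m] (h : IsUnit (A + κ • 1)) :
    HasDerivAt (fun x : ℝ => (A + x • 1)⁻¹) (-((A + κ • 1)⁻¹ * (A + κ • 1)⁻¹)) κ := by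
  obtain ⟨u, hu⟩ := h
  have hshift : HasDerivAt (fun x : ℝ => A + x • (1 : Matrix m m ℝ)) ((1 : ℝ) • 1) κ :=
    ((hasDerivAt_id κ).smul_const _).const_add A
  have hinv := hasFDerivAt_ringInverse (𝕜 := ℝ) u
  rw [hu] at hinv
  have hcomp := hinv.comp_hasDerivAt κ hshift
  simp only [Function.comp_def, one_smul, _root_.neg_apply,
    ContinuousLinearMap.mulLeftRight_apply, mul_one, coe_units_inv, hu,
    ← nonsing_inv_eq_ringInverse] at hcomp
  exact hcomp

end Resolvent

section DegreesOfFreedom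

variable {n : ℕ} {A : Matrix (Fin n) (Fin n) ℝ} {κ : ℝ}

lemma df1_sub_df2 (h : IsUnit (A + κ • 1)) :
    df1 A κ - df2 A κ = κ * (1 / n * (A * (A + κ • 1)⁻¹ ^ 2).trace) := by
  set R := (A + κ • (1 : Matrix (Fin n) (Fin n) ℝ))⁻¹
  have hAR : A * R = 1 - κ • R := by
    have hR : (A + κ • 1) * R = 1 := mul_nonsing_inv _ ((isUnit_iff_isUnit_det _).mp h)
    rw [add_mul, smul_mul, one_mul] at hR
    exact eq_sub_of_add_eq hR
  have hsq : A ^ 2 * R ^ 2 = A * R - κ • (A * R ^ 2) := by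
    calc A ^ 2 * R ^ 2 = A * (A * R) * R := by simp only [sq, mul_assoc]
      _ = A * (1 - κ • R) * R := by rw [hAR]
      _ = A * R - κ • (A * R ^ 2) := by
        simp only [mul_sub, sub_mul, mul_one, mul_smul_comm, smul_mul_assoc, sq, mul_assoc]
  rw [df1, df2, hsq, trace_sub, trace_smul, smul_eq_mul]
  ring

attribute [local instance] Matrix.linftyOpNormedRing Matrix.linftyOpNormedAlgebra in
lemma hasDerivAt_df1 (h : IsUnit (A + κ • 1)) (hκ : κ ≠ 0) :
    HasDerivAt (df1 A) ((df2 A κ - df1 A κ) / κ) κ := by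
  let L := LinearMap.toContinuousLinearMap (traceLinearMap (Fin n) ℝ ℝ ∘ₗ LinearMap.mulLeft ℝ A)
  have hR := hasDerivAt_inv_add_smul_one h
  have hL := (L.hasFDerivAt.comp_hasDerivAt κ hR).const_mul (1 / (n : ℝ))
  have hval : 1 / (n : ℝ) * L (-((A + κ • 1)⁻¹ * (A + κ • 1)⁻¹)) = (df2 A κ - df1 A κ) / κ := by
    rw [← neg_sub, neg_div, df1_sub_df2 h]
    simp only [L, LinearMap.coe_toContinuousLinearMap', LinearMap.coe_comp, Function.comp_apply,
      LinearMap.mulLeft_apply, traceLinearMap_apply, mul_neg, trace_neg, sq]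
    field_simp
  exact hL.congr_deriv hval

lemma df2_lt_df1 [NeZero n] (hA : A.PosDef) (hκ : 0 < κ) : df2 A κ < df1 A κ := by
  have hPD := hA.posSemidef.posDef_add_smul_one hκ
  set R := (A + κ • (1 : Matrix (Fin n) (Fin n) ℝ))⁻¹
  have htrace : 0 < (A * R ^ 2).trace := by
    have hRAR := hA.conjTranspose_mul_mul_same (mulVec_injective_of_isUnit hPD.inv.isUnit)
    rw [hPD.inv.isHermitian.eq] at hRAR
    rw [sq, ← mul_assoc, trace_mul_cycle]
    exact hRAR.trace_pos
  rw [← sub_pos, df1_sub_df2 hPD.isUnit]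
  have hn : (0 : ℝ) < n := by exact_mod_cast Nat.pos_of_ne_zero (NeZero.ne n)
  exact mul_pos hκ (mul_pos (by positivity) htrace)

end DegreesOfFreedom

lemma HasDerivAt.unique_of_eqOn_Ioi {f g : ℝ → ℝ} {f' g' a x : ℝ} (hf : HasDerivAt f f' x)
    (hg : HasDerivAt g g' x) (hx : a < x) (hfg : Set.EqOn f g (Set.Ioi a)) : f' = g' :=
  hf.unique (hg.congr_of_eventuallyEq (Filter.eventuallyEq_of_mem (Ioi_mem_nhds hx) hfg))

lemma eq_of_linearized_relations {κ κt κ' κt' d1 d2 e1 e2 q lam : ℝ}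
    (hlam : lam ≠ 0) (hgap : e2 < e1)
    (hmatch : e1 = q * d1) (hdual : κ * κt * (q * d1) = lam)
    (hmatch' : (e2 - e1) / κt * κt' = q * ((d2 - d1) / κ * κ'))
    (hdual' : (κ' * κt + κ * κt') * (q * d1) + κ * κt * (q * ((d2 - d1) / κ * κ')) = 1) :
    κ' = κ / lam * ((1 - e2 / e1) / (1 - d2 / d1 * (e2 / e1))) := by
  obtain ⟨⟨hκ, hκt⟩, hq, hd1⟩ : (κ ≠ 0 ∧ κt ≠ 0) ∧ q ≠ 0 ∧ d1 ≠ 0 := by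
    rw [← hdual] at hlam
    simpa only [mul_ne_zero_iff] using hlam
  have he1 : e1 ≠ 0 := hmatch ▸ mul_ne_zero hq hd1
  field_simp at hmatch' hdual'
  have hsolve : κ' * κt * (q * d2 * e2 - e1 ^ 2) = e2 - e1 := by
    linear_combination (e2 - e1) * hdual' - e1 * hmatch'
      - (κ' * κt * e1 - κt' * κ * (e2 - e1)) * hmatch
  have hW : q * d2 * e2 - e1 ^ 2 ≠ 0 := by
    rintro hW
    rw [hW, mul_zero] at hsolve
    linarith
  have hden : d1 * e1 - d2 * e2 ≠ 0 := by
    rintro h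
    exact hW (by linear_combination -q * h - e1 * hmatch)
  rw [← hdual]
  field_simp
  rw [eq_div_iff (by rwa [mul_comm e2])]
  linear_combination -hsolve - κ' * κt * e1 * hmatch

theorem stmt13_general {N T : ℕ} (Sg : Matrix (Fin N) (Fin N) ℝ) (hSg : Sg.PosSemidef)
    (K : Matrix (Fin T) (Fin T) ℝ) (hK : K.PosDef)
    (q : ℝ)
    (k kt : ℝ → ℝ)
    (hkpos : ∀ lam : ℝ, 0 < lam → 0 < k lam)
    (hktpos : ∀ lam : ℝ, 0 < lam → 0 < kt lam)
    (hkdiff : ∀ lam : ℝ, 0 < lam → DifferentiableAt ℝ k lam)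
    (hktdiff : ∀ lam : ℝ, 0 < lam → DifferentiableAt ℝ kt lam)
    (hmatch : ∀ lam : ℝ, 0 < lam → df1 K (kt lam) = q * df1 Sg (k lam))
    (hdual : ∀ lam : ℝ, 0 < lam → k lam * kt lam * (q * df1 Sg (k lam)) = lam) :
    ∀ lam : ℝ, 0 < lam →
      deriv k lam =
        (k lam / lam) * ((1 - df2 K (kt lam) / df1 K (kt lam)) /
          (1 - (df2 Sg (k lam) / df1 Sg (k lam)) * (df2 K (kt lam) / df1 K (kt lam)))) := by
  intro lam hlam
  have hk := hkpos lam hlam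
  have hkt := hktpos lam hlam
  have hdf : HasDerivAt (fun x => df1 Sg (k x))
      ((df2 Sg (k lam) - df1 Sg (k lam)) / k lam * deriv k lam) lam :=
    (hasDerivAt_df1 (hSg.posDef_add_smul_one hk).isUnit hk.ne').comp lam
      (hkdiff lam hlam).hasDerivAt
  have hdfK : HasDerivAt (fun x => df1 K (kt x))
      ((df2 K (kt lam) - df1 K (kt lam)) / kt lam * deriv kt lam) lam :=
    (hasDerivAt_df1 (hK.posSemidef.posDef_add_smul_one hkt).isUnit hkt.ne').comp lam
      (hktdiff lam hlam).hasDerivAt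
  have hmatch' := hdfK.unique_of_eqOn_Ioi (hdf.const_mul q) hlam hmatch
  have hdual' := (((hkdiff lam hlam).hasDerivAt.mul (hktdiff lam hlam).hasDerivAt).mul
    (hdf.const_mul q)).unique_of_eqOn_Ioi (hasDerivAt_id lam) hlam hdual
  have : NeZero T := ⟨by
    rintro rfl
    have h := hdual lam hlam
    rw [← hmatch lam hlam] at h
    simp [df1, hlam.ne] at h⟩
  exact eq_of_linearized_relations hlam.ne' (df2_lt_df1 hK hkt) (hmatch lam hlam)
    (hdual lam hlam) hmatch' hdual'

/-- if differentiable `κ, κ̃ : (0,∞) → (0,∞)` satisfy the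
degrees-of-freedom matching relation `df¹_K(κ̃(λ)) = q·df¹_Σ(κ(λ))` and the duality
relation `κ(λ)·κ̃(λ)·q·df¹_Σ(κ(λ)) = λ` for all `λ > 0`, then, writing
`df₁ = df¹_Σ(κ(λ))`, `df₂ = df²_Σ(κ(λ))`, `df̃₁ = df¹_K(κ̃(λ))`, `df̃₂ = df²_K(κ̃(λ))`
and `γ = (df₂/df₁)·(df̃₂/df̃₁)`, one has
`κ′(λ) = (κ(λ)/λ)·(1 − df̃₂/df̃₁)/(1 − γ)`. -/
theorem stmt13 {N T : ℕ} (Sg : Matrix (Fin N) (Fin N) ℝ) (hSg : Sg.PosSemidef)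
    (hSg0 : Sg ≠ 0)
    (K : Matrix (Fin T) (Fin T) ℝ) (hK : K.PosDef)
    (q : ℝ) (hq : 0 < q)
    (k kt : ℝ → ℝ)
    (hkpos : ∀ lam : ℝ, 0 < lam → 0 < k lam)
    (hktpos : ∀ lam : ℝ, 0 < lam → 0 < kt lam)
    (hkdiff : ∀ lam : ℝ, 0 < lam → DifferentiableAt ℝ k lam)
    (hktdiff : ∀ lam : ℝ, 0 < lam → DifferentiableAt ℝ kt lam)
    (hmatch : ∀ lam : ℝ, 0 < lam → df1 K (kt lam) = q * df1 Sg (k lam))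
    (hdual : ∀ lam : ℝ, 0 < lam → k lam * kt lam * (q * df1 Sg (k lam)) = lam) :
    ∀ lam : ℝ, 0 < lam →
      deriv k lam =
        (k lam / lam) * ((1 - df2 K (kt lam) / df1 K (kt lam)) /
          (1 - (df2 Sg (k lam) / df1 Sg (k lam)) * (df2 K (kt lam) / df1 K (kt lam)))) :=
  stmt13_general Sg hSg K hK q k kt hkpos hktpos hkdiff hktdiff hmatch hdual
end
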